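/- arXiv:1501.01202 — 5 statements merged into one kernel-verified Lean document; each statement's English description precedes it below -/
import Mathlib

section
/- Let ESP = (α, p) be an exponential smoothing model satisfying Assumption A, and let x_{1:n} be a deterministic bit sequence of length n ≥ 1. Then ℓ(x_{1:n}; ESP) − h(x_{1:n}) ≤ ∑_{i=0}^{n−1} log₂(1/(1 − p(1)·βᵢ)). -/
open Finset Real

/-- The exponential smoothing model's prediction: `espP α p x k y` is the probability
assigned to bit `y` after observing `x 1, …, x k` (bits are `Bool`, `1 ↦ true`). -/
noncomputable def espP (α : ℕ → ℝ) (p : Bool → ℝ) (x : ℕ → Bool) : ℕ → Bool → ℝ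
  | 0, y => p y
  | k + 1, y =>
      if y = x (k + 1) then α (k + 1) * espP α p x k y + (1 - α (k + 1))
      else α (k + 1) * espP α p x k y

/-- Ideal code length assigned by the model to the letters `x (a+1), …, x b`. -/
noncomputable def codeLen (α : ℕ → ℝ) (p : Bool → ℝ) (x : ℕ → Bool) (a b : ℕ) : ℝ :=
  ∑ i ∈ Finset.Ico a b, -Real.logb 2 (espP α p x i (x (i + 1)))

/-- `beta α i = α 1 * ⋯ * α i`, with `beta α 0 = 1`. -/
noncomputable def beta (α : ℕ → ℝ) (i : ℕ) : ℝ := ∏ k ∈ Finset.Icc 1 i, α k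

/-- Binary entropy function (base-2); `Real.logb 2 0 = 0` handles the `0 log 0 = 0` convention. -/
noncomputable def binEnt (q : ℝ) : ℝ := -q * Real.logb 2 q - (1 - q) * Real.logb 2 (1 - q)

/-- Empirical entropy of the subsequence `x (a+1), …, x b`. -/
noncomputable def empEnt (x : ℕ → Bool) (a b : ℕ) : ℝ :=
  ((b : ℝ) - a) *
    binEnt ((((Finset.Icc (a + 1) b).filter (fun i => x i = true)).card : ℝ) / ((b : ℝ) - a))

/-- `S` is a partition of the integer interval `(0, n]` into segments `(a, b]`
(represented by pairs `(a, b)`): every point of `(0, n]` lies in exactly one segment. -/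
def IsPartition (S : Finset (ℕ × ℕ)) (n : ℕ) : Prop :=
  (∀ s ∈ S, s.1 < s.2 ∧ s.2 ≤ n) ∧
    ∀ i, 1 ≤ i → i ≤ n → ∃! s, s ∈ S ∧ s.1 < i ∧ i ≤ s.2

/-! Along a constant sequence `c, c, …` the smoothing recursion is affine with fixed point `1`,
so after `k` letters the model predicts `c` with probability `1 - p(¬c) βₖ`. Since
`p(¬c) ≤ p(1)`, each code length term is at most `log₂ (1 / (1 - p(1) βᵢ))`, while the empirical
entropy of a constant sequence vanishes. -/

lemma beta_succ (α : ℕ → ℝ) (k : ℕ) : beta α (k + 1) = beta α k * α (k + 1) :=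
  Finset.prod_Icc_succ_top (Nat.le_add_left 1 k) α

lemma beta_nonneg_and_le_one {α : ℕ → ℝ} (hα : ∀ k, 1 ≤ k → 0 ≤ α k ∧ α k ≤ 1) (i : ℕ) :
    0 ≤ beta α i ∧ beta α i ≤ 1 :=
  ⟨prod_nonneg fun k hk => (hα k (mem_Icc.mp hk).1).1,
    prod_le_one (fun k hk => (hα k (mem_Icc.mp hk).1).1) fun k hk => (hα k (mem_Icc.mp hk).1).2⟩

lemma espP_of_forall_eq (α : ℕ → ℝ) (p : Bool → ℝ) {x : ℕ → Bool} {c : Bool} {k : ℕ}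
    (hx : ∀ j ∈ Icc 1 k, x j = c) : espP α p x k c = 1 - (1 - p c) * beta α k := by
  induction k with
  | zero => simp [espP, beta]
  | succ k ih =>
    have hlast : x (k + 1) = c := hx (k + 1) (mem_Icc.mpr ⟨Nat.le_add_left 1 k, le_rfl⟩)
    rw [espP, if_pos hlast.symm, ih fun j hj => hx j (Icc_subset_Icc_right k.le_succ hj), beta_succ]
    ring

lemma binEnt_zero : binEnt 0 = 0 := by simp [binEnt]

lemma binEnt_div_self (t : ℝ) : binEnt (t / t) = 0 := by
  rcases eq_or_ne t 0 with rfl | ht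
  · simpa using binEnt_zero
  · simp [binEnt, div_self ht]

lemma empEnt_eq_zero_of_forall_eq {x : ℕ → Bool} {a b : ℕ}
    (hx : ∀ i ∈ Icc (a + 1) b, ∀ j ∈ Icc (a + 1) b, x i = x j) : empEnt x a b = 0 := by
  unfold empEnt
  rcases (Icc (a + 1) b).eq_empty_or_nonempty with hempty | ⟨j, hj⟩
  · simp [hempty, binEnt_zero]
  cases hxj : x j
  · have hfilter : (Icc (a + 1) b).filter (fun i => x i = true) = ∅ :=
      filter_false_of_mem fun i hi => by simp [hx i hi j hj, hxj]
    simp [hfilter, binEnt_zero]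
  · have hfilter : (Icc (a + 1) b).filter (fun i => x i = true) = Icc (a + 1) b :=
      filter_true_of_mem fun i hi => by simp [hx i hi j hj, hxj]
    have hab : a ≤ b := by have := mem_Icc.mp hj; omega
    have hcard : ((Icc (a + 1) b).card : ℝ) = b - a := by
      rw [Nat.card_Icc, Nat.add_sub_add_right, Nat.cast_sub hab]
    rw [hfilter, hcard, binEnt_div_self, mul_zero]

theorem stmt0_general (α : ℕ → ℝ) (p : Bool → ℝ) (x : ℕ → Bool) (n : ℕ)
    (hα : ∀ k, 1 ≤ k → 1 / 2 < α k ∧ α k < 1)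
    (hp0 : 0 < p false) (hple : p false ≤ p true) (hpsum : p false + p true = 1)
    (hdet : ∀ i ∈ Finset.Icc 1 n, ∀ j ∈ Finset.Icc 1 n, x i = x j) :
    codeLen α p x 0 n - empEnt x 0 n ≤
      ∑ i ∈ Finset.range n, Real.logb 2 (1 / (1 - p true * beta α i)) := by
  rw [empEnt_eq_zero_of_forall_eq hdet, sub_zero, codeLen, ← range_eq_Ico]
  refine sum_le_sum fun i hi => ?_
  obtain ⟨hβ0, hβ1⟩ := beta_nonneg_and_le_one
    (fun k hk => ⟨by linarith [(hα k hk).1], (hα k hk).2.le⟩) i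
  set c := x (i + 1)
  have hprefix : ∀ j ∈ Icc 1 i, x j = c := fun j hj =>
    hdet j (Icc_subset_Icc_right (mem_range.mp hi).le hj) (i + 1) (by simpa using mem_range.mp hi)
  have hflip : 1 - p c ≤ p true := by cases c <;> linarith
  have hpos : 0 < 1 - p true * beta α i := by nlinarith
  rw [espP_of_forall_eq α p hprefix, one_div, logb_inv, neg_le_neg_iff]
  exact logb_le_logb_of_le (by norm_num) hpos (by nlinarith)

theorem stmt0 (α : ℕ → ℝ) (p : Bool → ℝ) (x : ℕ → Bool) (n : ℕ) (hn : 1 ≤ n)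
    (hα : ∀ k, 1 ≤ k → 1 / 2 < α k ∧ α k < 1)
    (hp0 : 0 < p false) (hple : p false ≤ p true) (hpsum : p false + p true = 1)
    (hdet : ∀ i ∈ Finset.Icc 1 n, ∀ j ∈ Finset.Icc 1 n, x i = x j) :
    codeLen α p x 0 n - empEnt x 0 n ≤
      ∑ i ∈ Finset.range n, Real.logb 2 (1 / (1 - p true * beta α i)) :=
  stmt0_general α p x n hα hp0 hple hpsum hdet
end

section
/- Let x_{1:n} be a non-deterministic bit sequence of length n ≥ 2 such that the suffix x_{2:n} is also non-deterministic. Then h(x_{1:n}) − h(x_{2:n}) ≥ n·H(1/n) − (n−1)·H(1/(n−1)). -/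
open Finset Real

/-! Write `g s = (s + 1) logb (s + 1) - s logb s`; it is increasing on `[0, ∞)`, its derivative
being `log (1 + 1/s)`. Since `m · H(k/m) = m logb m - k logb k - (m - k) logb (m - k)`, prepending a
zero to a sequence of length `m` with `k` ones raises `m · H(k/m)` by `g m - g (m - k)`, and
prepending a one raises it by `g m - g k`. A non-deterministic suffix has `1 ≤ k ≤ m - 1`, so either
increment is at least `g m - g (m - 1)`, the increment for `k = 1`. -/

lemma binEnt_one_sub (q : ℝ) : binEnt (1 - q) = binEnt q := by
  unfold binEnt
  ring_nf

lemma mul_binEnt_div (m k : ℝ) :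
    m * binEnt (k / m) = m * logb 2 m - k * logb 2 k - (m - k) * logb 2 (m - k) := by
  unfold binEnt
  rcases eq_or_ne m 0 with rfl | hm
  · simp [logb_neg_eq_logb]
  rcases eq_or_ne k 0 with rfl | hk
  · simp
  rcases eq_or_ne (m - k) 0 with hmk | hmk
  · obtain rfl : k = m := by linarith
    simp [hm]
  rw [show 1 - k / m = (m - k) / m by field_simp, logb_div hk hm, logb_div hmk hm]
  field_simp
  ring

lemma monotoneOn_succ_mul_log_sub_mul_log :
    MonotoneOn (fun s : ℝ => (s + 1) * log (s + 1) - s * log s) (Set.Ici 0) := by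
  have hderiv : ∀ s : ℝ, 0 < s →
      HasDerivAt (fun s : ℝ => (s + 1) * log (s + 1) - s * log s) (log (s + 1) - log s) s := by
    intro s hs
    have hshift : HasDerivAt (fun s : ℝ => (s + 1) * log (s + 1)) ((log (s + 1) + 1) * 1) s :=
      (hasDerivAt_mul_log (by linarith)).comp s ((hasDerivAt_id s).add_const 1)
    exact (hshift.sub (hasDerivAt_mul_log hs.ne')).congr_deriv (by ring)
  refine monotoneOn_of_deriv_nonneg (convex_Ici 0) ?_ ?_ ?_
  · exact ((continuous_mul_log.comp (continuous_add_const 1)).sub continuous_mul_log).continuousOn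
  · intro s hs
    rw [interior_Ici] at hs
    exact (hderiv s hs).differentiableAt.differentiableWithinAt
  · intro s hs
    rw [interior_Ici] at hs
    rw [(hderiv s hs).deriv, sub_nonneg]
    exact log_le_log hs (by linarith)

lemma monotoneOn_succ_mul_logb_sub_mul_logb :
    MonotoneOn (fun s : ℝ => (s + 1) * logb 2 (s + 1) - s * logb 2 s) (Set.Ici 0) := by
  intro a ha b hb hab
  have h := monotoneOn_succ_mul_log_sub_mul_log ha hb hab
  simp only [logb, ← mul_div_assoc, ← sub_div] at h ⊢
  gcongr

lemma mul_binEnt_succ_sub_mul_binEnt_ge {m k : ℝ} (hk : 1 ≤ k) (hkm : k ≤ m - 1) :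
    (m + 1) * binEnt (k / (m + 1)) - m * binEnt (k / m) ≥
      (m + 1) * binEnt (1 / (m + 1)) - m * binEnt (1 / m) := by
  have hmono := monotoneOn_succ_mul_logb_sub_mul_logb (a := m - k) (b := m - 1)
    (by simp only [Set.mem_Ici]; linarith) (by simp only [Set.mem_Ici]; linarith) (by linarith)
  simp only [mul_binEnt_div, logb_one, mul_zero, sub_zero]
  dsimp only at hmono
  rw [show m - k + 1 = m + 1 - k by ring, show m - 1 + 1 = m by ring] at hmono
  rw [show m + 1 - 1 = m by ring]
  linarith

lemma mul_binEnt_succ_succ_sub_mul_binEnt_ge {m k : ℝ} (hk : 1 ≤ k) (hkm : k ≤ m - 1) :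
    (m + 1) * binEnt ((k + 1) / (m + 1)) - m * binEnt (k / m) ≥
      (m + 1) * binEnt (1 / (m + 1)) - m * binEnt (1 / m) := by
  have hm : m ≠ 0 := by linarith
  have hm1 : m + 1 ≠ 0 := by linarith
  rw [← binEnt_one_sub ((k + 1) / (m + 1)), ← binEnt_one_sub (k / m),
    show 1 - (k + 1) / (m + 1) = (m - k) / (m + 1) by field_simp; ring,
    show 1 - k / m = (m - k) / m by field_simp]
  exact mul_binEnt_succ_sub_mul_binEnt_ge (by linarith) (by linarith)

def onesCount (x : ℕ → Bool) (a b : ℕ) : ℕ := ((Icc (a + 1) b).filter (fun i => x i = true)).card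

lemma empEnt_eq (x : ℕ → Bool) (a b : ℕ) :
    empEnt x a b = ((b : ℝ) - a) * binEnt (onesCount x a b / ((b : ℝ) - a)) := rfl

lemma onesCount_eq_add_ite {x : ℕ → Bool} {a b : ℕ} (hab : a < b) :
    onesCount x a b = onesCount x (a + 1) b + if x (a + 1) then 1 else 0 := by
  have hIcc : Icc (a + 1) b = insert (a + 1) (Icc (a + 1 + 1) b) := by
    ext i
    simp only [mem_insert, mem_Icc]
    omega
  have hnotMem : a + 1 ∉ (Icc (a + 1 + 1) b).filter (fun i => x i = true) := by simp
  unfold onesCount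
  rw [hIcc, filter_insert]
  split_ifs with h <;> simp_all

lemma onesCount_pos_and_lt {x : ℕ → Bool} {a b : ℕ}
    (hnd : ∃ i ∈ Icc (a + 1) b, ∃ j ∈ Icc (a + 1) b, x i ≠ x j) :
    0 < onesCount x a b ∧ onesCount x a b < b - a := by
  obtain ⟨i, hi, j, hj, hij⟩ := hnd
  obtain ⟨t, ht, htrue, f, hf, hfalse⟩ :
      ∃ t ∈ Icc (a + 1) b, x t = true ∧ ∃ f ∈ Icc (a + 1) b, x f = false := by
    cases hxi : x i <;> cases hxj : x j <;> simp_all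
    · exact ⟨j, hj, hxj, i, hi, hxi⟩
    · exact ⟨i, hi, hxi, j, hj, hxj⟩
  constructor
  · exact card_pos.mpr ⟨t, mem_filter.mpr ⟨ht, htrue⟩⟩
  · have hssub : (Icc (a + 1) b).filter (fun i => x i = true) ⊂ Icc (a + 1) b :=
      (ssubset_iff_of_subset (filter_subset _ _)).mpr ⟨f, hf, by simp [hfalse]⟩
    have := card_lt_card hssub
    rw [Nat.card_Icc] at this
    unfold onesCount
    omega

theorem stmt3_general (x : ℕ → Bool) (n : ℕ)
    (hsufnd : ∃ i ∈ Finset.Icc 2 n, ∃ j ∈ Finset.Icc 2 n, x i ≠ x j) :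
    empEnt x 0 n - empEnt x 1 n ≥
      (n : ℝ) * binEnt (1 / n) - ((n : ℝ) - 1) * binEnt (1 / ((n : ℝ) - 1)) := by
  obtain ⟨hpos, hlt⟩ := onesCount_pos_and_lt (a := 1) hsufnd
  have hk : (1 : ℝ) ≤ onesCount x 1 n := by exact_mod_cast hpos
  have hkm : (onesCount x 1 n : ℝ) ≤ ((n : ℝ) - 1) - 1 := by
    have : ((onesCount x 1 n + 2 : ℕ) : ℝ) ≤ n := by exact_mod_cast (by omega : _ + 2 ≤ n)
    push_cast at this
    linarith
  have hn : (n : ℝ) = ((n : ℝ) - 1) + 1 := by ring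
  rw [empEnt_eq, empEnt_eq, onesCount_eq_add_ite (by omega), Nat.cast_zero, sub_zero, hn,
    add_sub_cancel_right, Nat.cast_one]
  cases x 1
  · simpa using mul_binEnt_succ_sub_mul_binEnt_ge hk hkm
  · simpa using mul_binEnt_succ_succ_sub_mul_binEnt_ge hk hkm

theorem stmt3 (x : ℕ → Bool) (n : ℕ) (hn : 2 ≤ n)
    (hnd : ∃ i ∈ Finset.Icc 1 n, ∃ j ∈ Finset.Icc 1 n, x i ≠ x j)
    (hsufnd : ∃ i ∈ Finset.Icc 2 n, ∃ j ∈ Finset.Icc 2 n, x i ≠ x j) :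
    empEnt x 0 n - empEnt x 1 n ≥
      (n : ℝ) * binEnt (1 / n) - ((n : ℝ) - 1) * binEnt (1 / ((n : ℝ) - 1)) :=
  stmt3_general x n hsufnd
end

section
/- For every real α with 0 < α < 1 and every integer m ≥ 0, ∑_{i=1}^{m} log₂(1/(1 − αⁱ)) ≤ (π·log₂ e)² / (6·log₂(1/α)). -/
open Finset Real

/-!
Expand `-log (1 - a ^ i) = ∑ₙ a ^ (i (n + 1)) / (n + 1)` and exchange the two sums: the `n`-th
term becomes a geometric sum in `r = a ^ (n + 1)`, at most `r / (1 - r) / (n + 1)`. Since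
`log (1 / r) ≤ 1 / r - 1`, this is at most `1 / ((n + 1) ^ 2 log (1 / a))`, and summing over `n`
gives `ζ(2) / log (1 / a) = π² / (6 log (1 / a))`. Converting to base 2 divides both sides by `log 2`.
-/

lemma div_one_sub_le_inv_neg_log {r : ℝ} (h0 : 0 < r) (h1 : r < 1) :
    r / (1 - r) ≤ (-log r)⁻¹ := by
  have hlog : 0 < -log r := neg_pos.mpr (log_neg h0 h1)
  have : -log r ≤ r⁻¹ - 1 := by
    simpa only [log_inv] using log_le_sub_one_of_pos (inv_pos.mpr h0)
  rw [div_le_iff₀ (by linarith), inv_mul_eq_div, le_div_iff₀ hlog]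
  calc r * -log r ≤ r * (r⁻¹ - 1) := by gcongr
    _ = 1 - r := by field_simp

lemma sum_Icc_pow_le_div_one_sub {K : Type*} [Field K] [LinearOrder K] [IsStrictOrderedRing K]
    {r : K} (h0 : 0 ≤ r) (h1 : r < 1) (m : ℕ) :
    ∑ i ∈ Icc 1 m, r ^ i ≤ r / (1 - r) := by
  have := geom_sum_Ico_le_of_lt_one (m := 1) (n := m + 1) h0 h1
  rwa [Ico_add_one_right_eq_Icc, pow_one] at this

lemma hasSum_one_div_nat_add_one_sq :
    HasSum (fun n : ℕ => 1 / ((n : ℝ) + 1) ^ 2) (π ^ 2 / 6) := by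
  have := (hasSum_nat_add_iff (f := fun n : ℕ => (1 : ℝ) / (n : ℝ) ^ 2) 1).2
    (by simpa using hasSum_zeta_two)
  exact_mod_cast this

lemma sum_pow_succ_div_le {a : ℝ} (h0 : 0 < a) (h1 : a < 1) (m n : ℕ) :
    ∑ i ∈ Icc 1 m, (a ^ i) ^ (n + 1) / (n + 1) ≤ (-log a)⁻¹ * (1 / ((n : ℝ) + 1) ^ 2) := by
  have hr0 : 0 < a ^ (n + 1) := pow_pos h0 _
  have hr1 : a ^ (n + 1) < 1 := pow_lt_one₀ h0.le h1 (by omega)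
  have hlog : 0 < -log a := neg_pos.mpr (log_neg h0 h1)
  calc ∑ i ∈ Icc 1 m, (a ^ i) ^ (n + 1) / (n + 1)
      = (∑ i ∈ Icc 1 m, (a ^ (n + 1)) ^ i) / (n + 1) := by
        rw [sum_div]; simp only [← pow_mul, mul_comm]
    _ ≤ (-log (a ^ (n + 1)))⁻¹ / (n + 1) := by
        gcongr
        exact (sum_Icc_pow_le_div_one_sub hr0.le hr1 m).trans (div_one_sub_le_inv_neg_log hr0 hr1)
    _ = (-log a)⁻¹ * (1 / ((n : ℝ) + 1) ^ 2) := by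
        rw [log_pow]; push_cast; field_simp

lemma sum_neg_log_one_sub_pow_le {a : ℝ} (h0 : 0 < a) (h1 : a < 1) (m : ℕ) :
    ∑ i ∈ Icc 1 m, -log (1 - a ^ i) ≤ π ^ 2 / (6 * -log a) := by
  have hexpand : HasSum (fun n : ℕ => ∑ i ∈ Icc 1 m, (a ^ i) ^ (n + 1) / (n + 1))
      (∑ i ∈ Icc 1 m, -log (1 - a ^ i)) := by
    refine hasSum_sum fun i hi => hasSum_pow_div_log_of_abs_lt_one ?_
    rw [abs_of_pos (pow_pos h0 i)]
    exact pow_lt_one₀ h0.le h1 (by simp at hi; omega)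
  calc ∑ i ∈ Icc 1 m, -log (1 - a ^ i)
      ≤ (-log a)⁻¹ * (π ^ 2 / 6) :=
        hasSum_le (sum_pow_succ_div_le h0 h1 m) hexpand (hasSum_one_div_nat_add_one_sq.mul_left _)
    _ = π ^ 2 / (6 * -log a) := by field_simp

theorem stmt10 (a : ℝ) (ha0 : 0 < a) (ha1 : a < 1) (m : ℕ) :
    ∑ i ∈ Finset.Icc 1 m, Real.logb 2 (1 / (1 - a ^ i)) ≤
      (π * Real.logb 2 (Real.exp 1)) ^ 2 / (6 * Real.logb 2 (1 / a)) := by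
  have hlog2 : 0 < log 2 := log_pos one_lt_two
  have hlhs : ∑ i ∈ Icc 1 m, logb 2 (1 / (1 - a ^ i)) =
      (∑ i ∈ Icc 1 m, -log (1 - a ^ i)) / log 2 := by
    simp only [sum_div, logb, one_div, log_inv]
  have hrhs : (π * logb 2 (exp 1)) ^ 2 / (6 * logb 2 (1 / a)) = π ^ 2 / (6 * -log a) / log 2 := by
    have hloga : log a < 0 := log_neg ha0 ha1
    simp only [logb, log_exp, one_div, log_inv]
    field_simp
  rw [hlhs, hrhs]
  gcongr
  exact sum_neg_log_one_sub_pow_le ha0 ha1 m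
end

section
/- For every real α with 0 < α < 1 and every real m > 0, ∫₀^m ln(1/(1 − α^z)) dz = (1/ln(1/α)) · ∑_{j=1}^{∞} (1 − α^{jm})/j². -/
open Finset Real

/-!
Expand `log (1 / (1 - x)) = ∑ xⁿ⁺¹ / (n + 1)` at `x = a ^ z`, which lies in `(0, 1)` for `z > 0`.
Since `(a ^ z) ^ n = (a ^ n) ^ z`, each term integrates to
`(1 - a ^ (n m)) / (n ² log (1 / a))`; all terms are nonnegative and these integrals are
bounded by a multiple of `1 / n²`, so the series may be integrated term by term.
-/

open MeasureTheory Set intervalIntegral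

theorem integral_const_rpow {b : ℝ} (hb0 : 0 < b) (hb1 : b ≠ 1) (s t : ℝ) :
    ∫ z in s..t, b ^ z = (b ^ t - b ^ s) / log b := by
  simp only [rpow_def_of_pos hb0]
  rw [integral_comp_mul_left exp (log_ne_zero_of_pos_of_ne_one hb0 hb1), integral_exp,
    smul_eq_mul, inv_mul_eq_div]

theorem intervalIntegral.integral_tsum_of_nonneg {f : ℕ → ℝ → ℝ} {a b : ℝ} (hab : a ≤ b)
    (hf : ∀ n, IntervalIntegrable (f n) volume a b) (hf0 : ∀ n, ∀ x ∈ Ioc a b, 0 ≤ f n x)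
    (hs : Summable fun n ↦ ∫ x in a..b, f n x) :
    ∫ x in a..b, ∑' n, f n x = ∑' n, ∫ x in a..b, f n x := by
  simp only [integral_of_le hab] at hs ⊢
  refine (integral_tsum_of_summable_integral_norm (fun n ↦ (hf n).1) (hs.congr fun n ↦ ?_)).symm
  exact setIntegral_congr_fun measurableSet_Ioc fun x hx ↦ (norm_of_nonneg (hf0 n x hx)).symm

theorem integral_rpow_pow_div {a : ℝ} (ha0 : 0 < a) (ha1 : a ≠ 1) {n : ℕ} (hn : n ≠ 0) (m : ℝ) :
    ∫ z in (0 : ℝ)..m, (a ^ z) ^ n / n = (1 - a ^ (n * m)) / (n ^ 2 * log (1 / a)) := by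
  have hn' : (n : ℝ) ≠ 0 := Nat.cast_ne_zero.mpr hn
  have hlog : log (a ^ (n : ℝ)) = n * log a := log_rpow ha0 n
  have hlog0 : log a ≠ 0 := log_ne_zero_of_pos_of_ne_one ha0 ha1
  have hb1 : a ^ (n : ℝ) ≠ 1 := by
    intro h
    rw [h, log_one] at hlog
    exact mul_ne_zero hn' hlog0 hlog.symm
  have hpow : ∀ z : ℝ, (a ^ z) ^ n = (a ^ (n : ℝ)) ^ z := fun z ↦ by
    rw [← rpow_natCast, ← rpow_mul ha0.le, ← rpow_mul ha0.le, mul_comm]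
  simp only [hpow]
  rw [intervalIntegral.integral_div, integral_const_rpow (rpow_pos_of_pos ha0 _) hb1, hlog,
    rpow_zero, ← rpow_mul ha0.le, one_div, log_inv]
  field_simp
  ring

theorem summable_one_sub_rpow_div_sq {a m : ℝ} (ha0 : 0 < a) (ha1 : a ≤ 1) (hm : 0 ≤ m) :
    Summable fun j : ℕ ↦ (1 - a ^ (((j : ℝ) + 1) * m)) / ((j : ℝ) + 1) ^ 2 := by
  have hp : Summable fun j : ℕ ↦ 1 / ((j : ℝ) + 1) ^ 2 := by
    exact_mod_cast (summable_nat_add_iff 1).mpr (summable_one_div_nat_pow.mpr one_lt_two)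
  refine hp.of_nonneg_of_le (fun j ↦ ?_) (fun j ↦ ?_)
  · have : a ^ (((j : ℝ) + 1) * m) ≤ 1 := rpow_le_one ha0.le ha1 (by positivity)
    exact div_nonneg (by linarith) (by positivity)
  · gcongr
    linarith [rpow_pos_of_pos ha0 (((j : ℝ) + 1) * m)]

theorem stmt11 (a : ℝ) (ha0 : 0 < a) (ha1 : a < 1) (m : ℝ) (hm : 0 < m) :
    ∫ z in (0 : ℝ)..m, Real.log (1 / (1 - a ^ z)) =
      (1 / Real.log (1 / a)) * ∑' j : ℕ, (1 - a ^ (((j : ℝ) + 1) * m)) / ((j : ℝ) + 1) ^ 2 := by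
  set f : ℕ → ℝ → ℝ := fun j z ↦ (a ^ z) ^ (j + 1) / (j + 1 : ℕ)
  have hseries : ∀ z ∈ uIoc 0 m, log (1 / (1 - a ^ z)) = ∑' j, f j z := by
    intro z hz
    rw [uIoc_of_le hm.le] at hz
    have hz1 : |a ^ z| < 1 := by
      rw [abs_of_pos (rpow_pos_of_pos ha0 z)]; exact rpow_lt_one ha0.le ha1 hz.1
    rw [one_div, log_inv, ← (hasSum_pow_div_log_of_abs_lt_one hz1).tsum_eq]
    simp [f]
  have hterm : ∀ j : ℕ, ∫ z in (0 : ℝ)..m, f j z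
      = 1 / log (1 / a) * ((1 - a ^ (((j : ℝ) + 1) * m)) / ((j : ℝ) + 1) ^ 2) := by
    intro j
    rw [integral_rpow_pow_div ha0 ha1.ne j.succ_ne_zero]
    push_cast
    rw [div_mul_eq_div_div, one_div_mul_eq_div]
  rw [integral_congr_ae (ae_of_all _ hseries), integral_tsum_of_nonneg hm.le, tsum_congr hterm,
    tsum_mul_left]
  · exact fun j ↦ Continuous.intervalIntegrable (by fun_prop (disch := positivity)) _ _
  · exact fun j z _ ↦ by positivity
  · exact ((summable_one_sub_rpow_div_sq ha0 ha1.le hm.le).mul_left _).congr fun j ↦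
      (hterm j).symm
end

section
/- Let αₖ = exp(−π/√(12(k+1))) for k ≥ 1, and set β₀ = 1 and βᵢ = α₁·…·αᵢ for i ≥ 1. Then for all integers 0 ≤ a < b ≤ n, ∑_{i : a < i < b} log₂(1/(1 − βᵢ/β_a)) ≤ (π·log₂ e/√3)·√n. -/
open Finset Real

/-! With `x = π / √(12 n)` every `α k` with `k < n` is at most `r = e^{-x}`, so `β_i / β_a ≤ r^{i-a}`
and the sum is at most `∑_{j ≥ 1} -log (1 - r^j) / log 2`. Expanding `-log (1 - r^j) = ∑_m r^{jm} / m`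
and summing over `j` first turns this into `∑_m r^m / (m (1 - r^m)) ≤ ∑_m r / ((1 - r) m²)
= (π² / 6) · r / (1 - r) ≤ π² / (6x)`, which is the claimed bound. -/

section LogSeries

variable {r : ℝ}

lemma succ_mul_pow_succ_mul_one_sub_le (hr0 : 0 ≤ r) (hr1 : r ≤ 1) (m : ℕ) :
    ((m : ℝ) + 1) * r ^ (m + 1) * (1 - r) ≤ r * (1 - r ^ (m + 1)) := by
  have hgeom : (1 - r) * ∑ t ∈ range (m + 1), r ^ t = 1 - r ^ (m + 1) := by
    linear_combination -geom_sum_mul r (m + 1)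
  have hlow : ((m : ℝ) + 1) * r ^ m ≤ ∑ t ∈ range (m + 1), r ^ t := by
    calc ((m : ℝ) + 1) * r ^ m = ∑ t ∈ range (m + 1), r ^ m := by simp
      _ ≤ ∑ t ∈ range (m + 1), r ^ t := sum_le_sum fun t ht =>
          pow_le_pow_of_le_one hr0 hr1 (Nat.le_of_lt_succ (mem_range.mp ht))
  calc ((m : ℝ) + 1) * r ^ (m + 1) * (1 - r) = r * (1 - r) * (((m : ℝ) + 1) * r ^ m) := by ring
    _ ≤ r * (1 - r) * ∑ t ∈ range (m + 1), r ^ t := by gcongr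
    _ = r * (1 - r ^ (m + 1)) := by rw [mul_assoc, hgeom]

lemma pow_succ_div_one_sub_pow_succ_div_le (hr0 : 0 ≤ r) (hr1 : r < 1) (m : ℕ) :
    r ^ (m + 1) / (1 - r ^ (m + 1)) / ((m : ℝ) + 1) ≤ 1 / ((m : ℝ) + 1) ^ 2 * (r / (1 - r)) := by
  have hpow : r ^ (m + 1) < 1 := pow_lt_one₀ hr0 hr1 m.succ_ne_zero
  have hr : 0 < 1 - r := by linarith
  have hrm : 0 < 1 - r ^ (m + 1) := by linarith
  rw [div_div, one_div_mul_eq_div, div_div, div_le_div_iff₀ (by positivity) (by positivity)]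
  nlinarith [succ_mul_pow_succ_mul_one_sub_le hr0 hr1.le m]

lemma summable_pow_mul_div (hr0 : 0 < r) (hr1 : r < 1) :
    Summable fun p : ℕ × ℕ => r ^ ((p.1 + 1) * (p.2 + 1)) / ((p.2 : ℝ) + 1) := by
  have hgeom : Summable fun p : ℕ × ℕ => r ^ p.1 * r ^ p.2 :=
    (summable_geometric_of_lt_one hr0.le hr1).mul_of_nonneg
      (summable_geometric_of_lt_one hr0.le hr1) (fun _ => by positivity) fun _ => by positivity
  refine hgeom.of_nonneg_of_le (fun _ => by positivity) fun p => ?_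
  calc r ^ ((p.1 + 1) * (p.2 + 1)) / ((p.2 : ℝ) + 1) ≤ r ^ ((p.1 + 1) * (p.2 + 1)) :=
        div_le_self (by positivity) (by linarith [p.2.cast_nonneg (α := ℝ)])
    _ ≤ r ^ (p.1 + p.2) := pow_le_pow_of_le_one hr0.le hr1.le (by nlinarith)
    _ = r ^ p.1 * r ^ p.2 := pow_add r p.1 p.2

lemma hasSum_pow_mul_div_left (hr0 : 0 < r) (hr1 : r < 1) (j : ℕ) :
    HasSum (fun m : ℕ => r ^ ((j + 1) * (m + 1)) / ((m : ℝ) + 1)) (-log (1 - r ^ (j + 1))) := by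
  have hpow : |r ^ (j + 1)| < 1 := by
    rw [abs_of_pos (by positivity)]; exact pow_lt_one₀ hr0.le hr1 j.succ_ne_zero
  simpa only [← pow_mul] using hasSum_pow_div_log_of_abs_lt_one hpow

lemma hasSum_pow_mul_div_right (hr0 : 0 < r) (hr1 : r < 1) (m : ℕ) :
    HasSum (fun j : ℕ => r ^ ((j + 1) * (m + 1)) / ((m : ℝ) + 1))
      (r ^ (m + 1) / (1 - r ^ (m + 1)) / ((m : ℝ) + 1)) := by
  have hgeom := hasSum_geometric_of_lt_one (r := r ^ (m + 1)) (by positivity)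
    (pow_lt_one₀ hr0.le hr1 m.succ_ne_zero)
  refine ((hgeom.mul_left (r ^ (m + 1))).div_const ((m : ℝ) + 1)).congr_fun fun j => ?_
  rw [add_mul, one_mul, pow_add, pow_mul', mul_comm]

lemma tsum_neg_log_one_sub_pow_succ_le (hr0 : 0 < r) (hr1 : r < 1) :
    Summable (fun j : ℕ => -log (1 - r ^ (j + 1))) ∧
      ∑' j : ℕ, -log (1 - r ^ (j + 1)) ≤ π ^ 2 / 6 * (r / (1 - r)) := by
  set f : ℕ → ℕ → ℝ := fun j m => r ^ ((j + 1) * (m + 1)) / ((m : ℝ) + 1)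
  have hf : Summable (Function.uncurry f) := summable_pow_mul_div hr0 hr1
  have hrows := hasSum_pow_mul_div_left hr0 hr1
  have hcols := hasSum_pow_mul_div_right hr0 hr1
  have hbasel : HasSum (fun m : ℕ => 1 / ((m : ℝ) + 1) ^ 2) (π ^ 2 / 6) := by
    simpa using (hasSum_nat_add_iff' 1).mpr hasSum_zeta_two
  have hbound := pow_succ_div_one_sub_pow_succ_div_le hr0.le hr1
  have hf0 : ∀ j m, 0 ≤ f j m := fun _ _ => div_nonneg (pow_nonneg hr0.le _) (by positivity)
  have hcols_summable : Summable fun m : ℕ => r ^ (m + 1) / (1 - r ^ (m + 1)) / ((m : ℝ) + 1) :=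
    (hbasel.summable.mul_right _).of_nonneg_of_le (fun m => (hcols m).nonneg fun j => hf0 j m)
      hbound
  refine ⟨((summable_prod_of_nonneg fun p => hf0 p.1 p.2).mp hf).2.congr
    fun j => (hrows j).tsum_eq, ?_⟩
  calc ∑' j : ℕ, -log (1 - r ^ (j + 1)) = ∑' (j : ℕ) (m : ℕ), f j m :=
        tsum_congr fun j => (hrows j).tsum_eq.symm
    _ = ∑' (m : ℕ) (j : ℕ), f j m :=
        (hf.tsum_comm' (fun j => (hrows j).summable) fun m => (hcols m).summable).symm
    _ = ∑' m : ℕ, r ^ (m + 1) / (1 - r ^ (m + 1)) / ((m : ℝ) + 1) :=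
        tsum_congr fun m => (hcols m).tsum_eq
    _ ≤ ∑' m : ℕ, 1 / ((m : ℝ) + 1) ^ 2 * (r / (1 - r)) :=
        hcols_summable.tsum_le_tsum hbound (hbasel.summable.mul_right _)
    _ = π ^ 2 / 6 * (r / (1 - r)) := (hbasel.mul_right _).tsum_eq

lemma sum_Ioo_neg_log_one_sub_pow_le (hr0 : 0 < r) (hr1 : r < 1) (a b : ℕ) :
    ∑ i ∈ Ioo a b, -log (1 - r ^ (i - a)) ≤ π ^ 2 / 6 * (r / (1 - r)) := by
  obtain ⟨hsummable, htsum⟩ := tsum_neg_log_one_sub_pow_succ_le hr0 hr1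
  have hreindex : ∑ i ∈ Ioo a b, -log (1 - r ^ (i - a))
      = ∑ j ∈ range (b - (a + 1)), -log (1 - r ^ (j + 1)) := by
    rw [← Ico_add_one_left_eq_Ioo, sum_Ico_eq_sum_range]
    refine sum_congr rfl fun j _ => ?_
    rw [show a + 1 + j - a = j + 1 by omega]
  rw [hreindex]
  refine (hsummable.sum_le_tsum _ (fun j _ => ?_)).trans htsum
  have hpow : r ^ (j + 1) < 1 := pow_lt_one₀ hr0.le hr1 j.succ_ne_zero
  have hpow0 : 0 < r ^ (j + 1) := by positivity
  exact neg_nonneg.mpr (log_nonpos (by linarith) (by linarith))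

end LogSeries

lemma exp_neg_div_one_sub_exp_neg_le {x : ℝ} (hx : 0 < x) :
    exp (-x) / (1 - exp (-x)) ≤ 1 / x := by
  have hexp : exp (-x) * exp x = 1 := by rw [← exp_add, neg_add_cancel, exp_zero]
  have hlt : exp (-x) < 1 := exp_lt_one_iff.mpr (by linarith)
  rw [div_le_div_iff₀ (by linarith) hx]
  nlinarith [add_one_le_exp x, exp_pos (-x)]

lemma beta_mul_prod_Ioc (α : ℕ → ℝ) {a i : ℕ} (hai : a ≤ i) :
    beta α a * ∏ k ∈ Ioc a i, α k = beta α i := by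
  have hIcc : ∀ m : ℕ, Icc 1 m = Ioc 0 m := fun m => Icc_add_one_left_eq_Ioc 0 m
  rw [beta, beta, hIcc, hIcc]
  exact prod_Ioc_consecutive α a.zero_le hai

lemma beta_div_beta_le_pow {α : ℕ → ℝ} {r : ℝ} {a i : ℕ} (hai : a ≤ i) (hpos : ∀ k, 0 < α k)
    (hle : ∀ k ∈ Ioc a i, α k ≤ r) : beta α i / beta α a ≤ r ^ (i - a) := by
  have hbeta : 0 < beta α a := prod_pos fun k _ => hpos k
  rw [← beta_mul_prod_Ioc α hai, mul_div_cancel_left₀ _ hbeta.ne']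
  calc ∏ k ∈ Ioc a i, α k ≤ ∏ _k ∈ Ioc a i, r :=
        prod_le_prod (fun k _ => (hpos k).le) hle
    _ = r ^ (i - a) := by rw [prod_const, Nat.card_Ioc]

lemma exp_neg_pi_div_sqrt_le {k n : ℕ} (hk : k + 1 ≤ n) :
    exp (-(π / √(12 * ((k : ℝ) + 1)))) ≤ exp (-(π / √(12 * n))) := by
  have hk' : (k : ℝ) + 1 ≤ n := by exact_mod_cast hk
  gcongr

lemma logb_one_div_one_sub_le {q s : ℝ} (hqs : q ≤ s) (hs : s < 1) :
    logb 2 (1 / (1 - q)) ≤ -log (1 - s) / log 2 := by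
  calc logb 2 (1 / (1 - q)) ≤ logb 2 (1 / (1 - s)) :=
        logb_le_logb_of_le one_lt_two (by simp; linarith) (one_div_le_one_div_of_le (by linarith)
          (by linarith))
    _ = -log (1 - s) / log 2 := by rw [logb, one_div, log_inv]

lemma pi_sq_div_six_div_log_two_eq {n : ℝ} (hn : 0 < n) :
    π ^ 2 / 6 * (1 / (π / √(12 * n))) / log 2 = π * logb 2 (exp 1) / √3 * √n := by
  have h12 : √(12 * n) = 2 * √3 * √n := by
    rw [show (12 : ℝ) * n = 2 ^ 2 * 3 * n by norm_num, sqrt_mul (by positivity),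
      sqrt_mul (by positivity), sqrt_sq zero_le_two]
  have h3 : √3 * √3 = 3 := mul_self_sqrt (by norm_num)
  have : √3 ≠ 0 := by positivity
  rw [logb, log_exp, h12, one_div_div]
  field_simp
  linear_combination 2 * h3

theorem stmt16 (n a b : ℕ) (hab : a < b) (hbn : b ≤ n) :
    ∑ i ∈ Finset.Ioo a b,
        Real.logb 2
          (1 / (1 -
            beta (fun k => Real.exp (-(π / Real.sqrt (12 * ((k : ℝ) + 1))))) i /
              beta (fun k => Real.exp (-(π / Real.sqrt (12 * ((k : ℝ) + 1))))) a)) ≤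
      (π * Real.logb 2 (Real.exp 1) / Real.sqrt 3) * Real.sqrt n := by
  have hn : (0 : ℝ) < n := by exact_mod_cast (by omega : 0 < n)
  set x := π / √(12 * n)
  have hx : 0 < x := by positivity
  set r := exp (-x)
  have hr0 : 0 < r := exp_pos _
  have hr1 : r < 1 := exp_lt_one_iff.mpr (by linarith)
  calc _ ≤ ∑ i ∈ Ioo a b, -log (1 - r ^ (i - a)) / log 2 := by
        refine sum_le_sum fun i hi => logb_one_div_one_sub_le ?_
          (pow_lt_one₀ hr0.le hr1 (by simp at hi; omega))
        obtain ⟨hai, hib⟩ := mem_Ioo.mp hi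
        exact beta_div_beta_le_pow hai.le (fun k => exp_pos _)
          fun k hk => exp_neg_pi_div_sqrt_le (by simp at hk; omega)
    _ = (∑ i ∈ Ioo a b, -log (1 - r ^ (i - a))) / log 2 := (sum_div ..).symm
    _ ≤ π ^ 2 / 6 * (1 / x) / log 2 := by
        gcongr
        exact (sum_Ioo_neg_log_one_sub_pow_le hr0 hr1 a b).trans
          (mul_le_mul_of_nonneg_left (exp_neg_div_one_sub_exp_neg_le hx) (by positivity))
    _ = _ := pi_sq_div_six_div_log_two_eq hn
end
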